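/- With L, q, p, Π defined as closed-form functions of the tax rate τ by L = N[(1−τ)(mL_g+αF)+(mg+F)mN]/(α+(Nm−α)τ), q = (1−τ)(L+L_g−αg)/((Nm+α(1−τ))(L+L_g)), p = mw(L+L_g)/(L+L_g−α((L+L_g)q+g)), Π = ((L+L_g)q+g)(p−mw) − Fw, and assuming Nm > α, F > 0, w > 0, g ≥ 0, L_g ≥ 0, L+L_g−αg > 0, one has ∂Π/∂τ < 0 for τ ∈ (0,1): a tax increase lowers firm profit. -/

import Mathlib

/-!
Writing `A = L_g + N F`, `c = N m - α` and `D(τ) = α + c τ`, one has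
`L + L_g = (A (N m + α (1 - τ)) + m² N² g) / D` and `L + L_g - α g = (N m + α (1 - τ)) (A + g c) / D`.
Substituting into `q` and `p` makes all the factors `N m + α (1 - τ)` cancel, and on `(0, 1)` the profit
collapses to `Π(τ) = w α / (N (A + g c)) · (A + N m g - A τ)² / D(τ) - F w`.
The squared factor is positive and decreasing and `D` is positive and increasing, so `Π' < 0`.
-/

open Filter Topology

noncomputable def profit (α N m F w g Lg τ : ℝ) : ℝ :=
  let L := N * ((1 - τ) * (m * Lg + α * F) + (m * g + F) * m * N) / (α + (N * m - α) * τ)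
  let q := (1 - τ) * (L + Lg - α * g) / ((N * m + α * (1 - τ)) * (L + Lg))
  let p := m * w * (L + Lg) / (L + Lg - α * ((L + Lg) * q + g))
  ((L + Lg) * q + g) * (p - m * w) - F * w

lemma output_mul_markup_eq {α N m w g t S q p : ℝ} (hN : N ≠ 0) (hm : m ≠ 0)
    (hB : N * m + α * (1 - t) ≠ 0) (hS : S ≠ 0) (hSg : S - α * g ≠ 0)
    (hq : q = (1 - t) * (S - α * g) / ((N * m + α * (1 - t)) * S))
    (hp : p = m * w * S / (S - α * (S * q + g))) :
    (S * q + g) * (p - m * w) =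
      w * α * ((1 - t) * S + N * m * g) ^ 2 / (N * (N * m + α * (1 - t)) * (S - α * g)) := by
  set B := N * m + α * (1 - t) with hBdef
  set T := S - α * g with hTdef
  have hQ : S * q + g = ((1 - t) * S + N * m * g) / B := by
    rw [hq, eq_div_iff hB]; field_simp; rw [hBdef, hTdef]; ring
  have hmarkup : p - m * w = w * α * ((1 - t) * S + N * m * g) / (N * T) := by
    have hden : S - α * (S * q + g) = N * m * T / B := by
      rw [hQ, eq_div_iff hB]; field_simp; rw [hBdef, hTdef]; ring
    rw [hp, hden, eq_div_iff (by positivity)]; field_simp; rw [hBdef, hTdef]; ring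
  rw [hQ, hmarkup, div_mul_div_comm]
  ring

lemma labor_add_eq {α N m F g Lg t : ℝ} (hD : α + (N * m - α) * t ≠ 0) :
    N * ((1 - t) * (m * Lg + α * F) + (m * g + F) * m * N) / (α + (N * m - α) * t) + Lg =
      ((Lg + N * F) * (N * m + α * (1 - t)) + m ^ 2 * N ^ 2 * g) / (α + (N * m - α) * t) := by
  rw [div_add' _ _ _ hD]
  ring

lemma profit_eq {α N m F w g Lg t : ℝ} (hN : 0 < N) (hm : 0 < m) (hg : 0 ≤ g)
    (hA : 0 < Lg + N * F) (hc : 0 ≤ N * m - α)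
    (hD : 0 < α + (N * m - α) * t) (hB : 0 < N * m + α * (1 - t)) :
    profit α N m F w g Lg t =
      w * α / (N * (Lg + N * F + g * (N * m - α))) *
        (Lg + N * F + N * m * g - (Lg + N * F) * t) ^ 2 / (α + (N * m - α) * t) - F * w := by
  unfold profit
  simp only
  set S := N * ((1 - t) * (m * Lg + α * F) + (m * g + F) * m * N) / (α + (N * m - α) * t) + Lg
  have hS : S = ((Lg + N * F) * (N * m + α * (1 - t)) + m ^ 2 * N ^ 2 * g) /
      (α + (N * m - α) * t) := labor_add_eq hD.ne'
  have hK : 0 < Lg + N * F + g * (N * m - α) := by positivity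
  set A := Lg + N * F
  set B := N * m + α * (1 - t) with hBdef
  set D := α + (N * m - α) * t with hDdef
  have hSg : S - α * g = B * (A + g * (N * m - α)) / D := by
    rw [hS, eq_div_iff hD.ne']; field_simp; rw [hBdef, hDdef]; ring
  have hX : (1 - t) * S + N * m * g = B * (A + N * m * g - A * t) / D := by
    rw [hS, eq_div_iff hD.ne']; field_simp; rw [hBdef, hDdef]; ring
  have hS0 : 0 < S := by rw [hS]; positivity
  have hSg0 : 0 < S - α * g := by rw [hSg]; positivity
  rw [output_mul_markup_eq hN.ne' hm.ne' hB.ne' hS0.ne' hSg0.ne' rfl rfl, ← hBdef, hSg, hX]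
  field_simp

lemma hasDerivAt_mul_sq_div {k a b c d τ : ℝ} (hden : d + c * τ ≠ 0) :
    HasDerivAt (fun t => k * (a - b * t) ^ 2 / (d + c * t))
      (-(k * (a - b * τ) * (2 * b * (d + c * τ) + c * (a - b * τ))) / (d + c * τ) ^ 2) τ := by
  have hnum : HasDerivAt (fun t => k * (a - b * t) ^ 2) (k * (2 * (a - b * τ) * -b)) τ := by
    simpa using (((hasDerivAt_id τ).const_mul b).const_sub a).pow 2 |>.const_mul k
  have hden' : HasDerivAt (fun t => d + c * t) c τ := by
    simpa using ((hasDerivAt_id τ).const_mul c).const_add d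
  refine (hnum.div hden' hden).congr_deriv ?_
  ring

lemma deriv_mul_sq_div_neg {k a b c d τ : ℝ} (hk : 0 < k) (hx : 0 < a - b * τ) (hb : 0 < b)
    (hc : 0 ≤ c) (hden : 0 < d + c * τ) :
    deriv (fun t => k * (a - b * t) ^ 2 / (d + c * t)) τ < 0 := by
  rw [(hasDerivAt_mul_sq_div hden.ne').deriv]
  apply div_neg_of_neg_of_pos _ (by positivity)
  rw [neg_lt_zero]
  positivity

theorem stmt_17_general (α N m F w g Lg : ℝ) (hα : 0 < α) (hN : 0 < N) (hm : 0 < m)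
    (hF : 0 < F) (hw : 0 < w) (hg : 0 ≤ g) (hLg : 0 ≤ Lg) (hNm : N * m > α)
    (τ : ℝ) (hτ0 : 0 < τ) (hτ1 : τ < 1) :
    deriv (fun τ : ℝ =>
        let L := N * ((1 - τ) * (m * Lg + α * F) + (m * g + F) * m * N) / (α + (N * m - α) * τ)
        let q := (1 - τ) * (L + Lg - α * g) / ((N * m + α * (1 - τ)) * (L + Lg))
        let p := m * w * (L + Lg) / (L + Lg - α * ((L + Lg) * q + g))
        ((L + Lg) * q + g) * (p - m * w) - F * w) τ < 0 := by
  change deriv (profit α N m F w g Lg) τ < 0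
  have hc : 0 < N * m - α := by linarith
  have hA : 0 < Lg + N * F := by positivity
  have hEq : profit α N m F w g Lg =ᶠ[𝓝 τ] fun t =>
      w * α / (N * (Lg + N * F + g * (N * m - α))) *
        (Lg + N * F + N * m * g - (Lg + N * F) * t) ^ 2 / (α + (N * m - α) * t) - F * w := by
    filter_upwards [Ioo_mem_nhds hτ0 hτ1] with t ⟨ht0, ht1⟩
    exact profit_eq hN hm hg hA hc.le (by positivity) (by nlinarith)
  rw [hEq.deriv_eq, deriv_sub_const]
  exact deriv_mul_sq_div_neg (by positivity) (by nlinarith [mul_pos hA (sub_pos.2 hτ1)]) hA hc.le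
    (by positivity)

/-- A tax increase lowers firm profit. -/
theorem stmt_17 (α N m F w g Lg : ℝ) (hα : 0 < α) (hN : 0 < N) (hm : 0 < m)
    (hF : 0 < F) (hw : 0 < w) (hg : 0 ≤ g) (hLg : 0 ≤ Lg) (hNm : N * m > α)
    (τ : ℝ) (hτ0 : 0 < τ) (hτ1 : τ < 1)
    (hden : 0 < N * ((1 - τ) * (m * Lg + α * F) + (m * g + F) * m * N) / (α + (N * m - α) * τ)
      + Lg - α * g) :
    deriv (fun τ : ℝ =>
        let L := N * ((1 - τ) * (m * Lg + α * F) + (m * g + F) * m * N) / (α + (N * m - α) * τ)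
        let q := (1 - τ) * (L + Lg - α * g) / ((N * m + α * (1 - τ)) * (L + Lg))
        let p := m * w * (L + Lg) / (L + Lg - α * ((L + Lg) * q + g))
        ((L + Lg) * q + g) * (p - m * w) - F * w) τ < 0 :=
  stmt_17_general α N m F w g Lg hα hN hm hF hw hg hLg hNm τ hτ0 hτ1
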